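/- arXiv:2007.02648 — 3 statements merged into one kernel-verified Lean document; each statement's English description precedes it below -/
import Mathlib

section
/- Let C := (QA + B)ᵀ(QA + B) with Q the random transmission matrix of the DFA scheme built from coefficients a_1,…,a_K ∈ [0,P] with Σ_{k=1}^K a_k ≤ Δ(f‖P), and let A_i ∈ ℝ^{2KM×(2KM+2M)} be user-uncorrelated (writing A_i as 2M vertically stacked K×(2KM+2M) blocks, each block has at most one nonzero entry per column). Then the sub-Gaussian norm of the random variable tr(C) satisfies τ(tr C) ≤ 4·M·Δ(f‖P)·‖(A + A_i)(A − A_i)ᵀ‖_op + 2·√(2P)·‖ABᵀ‖_F. -/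
open MeasureTheory ProbabilityTheory Real Matrix

noncomputable def vecNorm {ι : Type*} [Fintype ι] (x : ι → ℝ) : ℝ :=
  Real.sqrt (∑ i, (x i) ^ 2)

/-- Operator (spectral) norm of a real matrix. -/
noncomputable def opNorm {ι κ : Type*} [Fintype ι] [Fintype κ] (A : Matrix ι κ ℝ) : ℝ :=
  sSup {c : ℝ | ∃ x : κ → ℝ, vecNorm x ≤ 1 ∧ c = vecNorm (A.mulVec x)}

/-- Frobenius norm of a real matrix. -/
noncomputable def frobNorm {ι κ : Type*} [Fintype ι] [Fintype κ] (A : Matrix ι κ ℝ) : ℝ :=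
  Real.sqrt (∑ i, ∑ j, (A i j) ^ 2)

/-- The sub-Gaussian norm of a real random variable:
`τ(X) := inf{t > 0 : ∀ λ ∈ ℝ, E exp(λ(X − EX)) ≤ exp(λ²t²/2)}`. -/
noncomputable def subGaussianNorm {Ω : Type*} [MeasureSpace Ω] (X : Ω → ℝ) : ℝ :=
  sInf {t : ℝ | 0 < t ∧ ∀ l : ℝ,
    (∫ ω, Real.exp (l * (X ω - ∫ ω', X ω'))) ≤ Real.exp (l ^ 2 * t ^ 2 / 2)}

/-!
Write `Q = Q(U)` and `G = A Bᵀ`. Expanding the square,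
`tr C = tr((QA)ᵀ QA) + 2 tr(Q G) + tr(Bᵀ B)`.

The middle term is a Rademacher sum `∑_{m,k} z_{m,k} U_k(m)` whose coefficients satisfy
`∑ z² ≤ 8 P ‖G‖_F²`, so it is sub-Gaussian with parameter `2 √(2P) ‖G‖_F` by Hoeffding's lemma
and independence.

The quadratic term is almost surely within a constant of its mean. Row `r` of `Q` is a vector
`y` with `‖y‖² = ∑ a_k ≤ Δ`, and `‖yA‖² - ‖yA_i‖² = yᵀ (A + A_i)(A - A_i)ᵀ y`. Because `A_i` is
user-uncorrelated and `U_k(m)² = 1`, `‖yA_i‖²` does not depend on `U`. Hence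
`tr((QA)ᵀ QA)` lies in an interval of half-width `2 M Δ ‖(A + A_i)(A - A_i)ᵀ‖_op` and is
sub-Gaussian by Hoeffding's lemma. Sub-Gaussian parameters add under sums (by Hölder), with no
independence needed.
-/

open scoped NNReal Matrix.Norms.L2Operator

lemma sq_sum_eq_sum_sq_of_support_subsingleton {ι R : Type*} [Fintype ι] [CommSemiring R]
    {f : ι → R} (hf : f.support.Subsingleton) : (∑ i, f i) ^ 2 = ∑ i, f i ^ 2 := by
  rcases hf.eq_empty_or_singleton with h | ⟨i, h⟩
  · simp [Function.support_eq_empty_iff.1 h]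
  · have hj : ∀ j, j ≠ i → f j = 0 := fun j hj ↦ Function.notMem_support.1 (h ▸ hj)
    rw [Fintype.sum_eq_single i hj, Fintype.sum_eq_single i fun j hji ↦ by simp [hj j hji]]

section LinearAlgebra

variable {ρ κ γ : Type*} [Fintype ρ] [Fintype κ]

lemma sq_frobNorm (G : Matrix ρ κ ℝ) : frobNorm G ^ 2 = ∑ i, ∑ j, G i j ^ 2 :=
  Real.sq_sqrt (by positivity)

lemma vecNorm_eq_norm_toLp (x : ρ → ℝ) : vecNorm x = ‖WithLp.toLp 2 x‖ := by
  simp [vecNorm, EuclideanSpace.norm_eq]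

lemma opNorm_eq_l2_opNorm [DecidableEq κ] (A : Matrix ρ κ ℝ) : opNorm A = ‖A‖ := by
  rw [l2_opNorm_def, ← ContinuousLinearMap.sSup_unitClosedBall_eq_norm, opNorm]
  congr 1
  ext c
  simp only [Set.mem_ofPred_eq, Set.mem_image, Metric.mem_closedBall, dist_zero_right,
    LinearEquiv.trans_apply, LinearMap.coe_toContinuousLinearMap', toLpLin_apply,
    vecNorm_eq_norm_toLp]
  constructor
  · rintro ⟨x, hx, rfl⟩
    exact ⟨WithLp.toLp 2 x, hx, rfl⟩
  · rintro ⟨x, hx, rfl⟩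
    exact ⟨x.ofLp, hx, rfl⟩

lemma opNorm_nonneg (A : Matrix ρ κ ℝ) : 0 ≤ opNorm A := by
  classical
  exact opNorm_eq_l2_opNorm A ▸ norm_nonneg A

lemma abs_dotProduct_mulVec_le [DecidableEq ρ] (W : Matrix ρ ρ ℝ) (x : ρ → ℝ) :
    |x ⬝ᵥ W *ᵥ x| ≤ ‖W‖ * (x ⬝ᵥ x) := by
  set y := WithLp.toLp 2 x
  have hx : x ⬝ᵥ x = ‖y‖ ^ 2 := by
    rw [← real_inner_self_eq_norm_sq, EuclideanSpace.inner_eq_star_dotProduct]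
    simp [y]
  have hWx : x ⬝ᵥ W *ᵥ x = inner ℝ y ((EuclideanSpace.equiv ρ ℝ).symm (W *ᵥ x)) := by
    rw [EuclideanSpace.inner_eq_star_dotProduct, dotProduct_comm]
    rfl
  rw [hWx, hx]
  calc _ ≤ ‖y‖ * ‖(EuclideanSpace.equiv ρ ℝ).symm (W *ᵥ x)‖ := abs_real_inner_le_norm _ _
    _ ≤ ‖y‖ * (‖W‖ * ‖y‖) := by gcongr; exact W.l2_opNorm_mulVec y
    _ = ‖W‖ * ‖y‖ ^ 2 := by ring

lemma vecMul_dotProduct_vecMul_sub_vecMul_dotProduct_vecMul [Fintype γ] (A Ai : Matrix ρ γ ℝ)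
    (y : ρ → ℝ) :
    (y ᵥ* A) ⬝ᵥ (y ᵥ* A) - (y ᵥ* Ai) ⬝ᵥ (y ᵥ* Ai) = y ⬝ᵥ ((A + Ai) * (A - Ai)ᵀ) *ᵥ y := by
  rw [← mulVec_mulVec, dotProduct_mulVec, mulVec_transpose, vecMul_add, vecMul_sub,
    add_dotProduct, dotProduct_sub, dotProduct_sub, dotProduct_comm (y ᵥ* Ai) (y ᵥ* A)]
  ring

lemma trace_transpose_mul_self [Fintype γ] (X : Matrix ρ γ ℝ) :
    trace (Xᵀ * X) = ∑ r, X r ⬝ᵥ X r := by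
  rw [trace_mul_comm]
  rfl

lemma trace_transpose_mul_self_add [Fintype γ] (X B : Matrix ρ γ ℝ) :
    trace ((X + B)ᵀ * (X + B)) = trace (Xᵀ * X) + 2 * trace (X * Bᵀ) + trace (Bᵀ * B) := by
  rw [transpose_add, Matrix.add_mul, Matrix.mul_add, Matrix.mul_add, trace_add, trace_add,
    trace_add, trace_mul_comm Bᵀ X, trace_mul_comm Xᵀ B, ← trace_transpose (B * Xᵀ),
    transpose_mul, transpose_transpose]
  ring

variable [DecidableEq ρ]

def blockRowMatrix (v : ρ → κ → ℝ) : Matrix ρ (ρ × κ) ℝ :=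
  of fun r j ↦ if j.1 = r then v r j.2 else 0

lemma blockRowMatrix_dotProduct (v : ρ → κ → ℝ) (r : ρ) (x : ρ × κ → ℝ) :
    blockRowMatrix v r ⬝ᵥ x = v r ⬝ᵥ fun k ↦ x (r, k) := by
  simp only [dotProduct, blockRowMatrix, of_apply, ite_mul, zero_mul, Fintype.sum_prod_type]
  rw [Finset.sum_comm, Finset.sum_comm (γ := κ)]
  simp

lemma blockRowMatrix_vecMul_apply (v : ρ → κ → ℝ) (r : ρ) (A : Matrix (ρ × κ) γ ℝ) (c : γ) :
    (blockRowMatrix v r ᵥ* A) c = ∑ k, v r k * A (r, k) c :=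
  blockRowMatrix_dotProduct v r _

lemma blockRowMatrix_dotProduct_self (v : ρ → κ → ℝ) (r : ρ) :
    blockRowMatrix v r ⬝ᵥ blockRowMatrix v r = v r ⬝ᵥ v r := by
  rw [blockRowMatrix_dotProduct]
  simp [blockRowMatrix]

lemma blockRowMatrix_vecMul_dotProduct_self [Fintype γ] {Ai : Matrix (ρ × κ) γ ℝ} {r : ρ}
    (hAi : ∀ c, (fun k ↦ Ai (r, k) c).support.Subsingleton) (v : ρ → κ → ℝ) :
    (blockRowMatrix v r ᵥ* Ai) ⬝ᵥ (blockRowMatrix v r ᵥ* Ai) =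
      ∑ c, ∑ k, v r k ^ 2 * Ai (r, k) c ^ 2 := by
  refine Finset.sum_congr rfl fun c _ ↦ ?_
  rw [blockRowMatrix_vecMul_apply, ← sq, sq_sum_eq_sum_sq_of_support_subsingleton
    ((hAi c).anti (Function.support_mul_subset_right _ _))]
  simp only [mul_pow]

lemma abs_trace_blockRowMatrix_mul_sub_le [Fintype γ] [DecidableEq κ] {A Ai : Matrix (ρ × κ) γ ℝ}
    (hAi : ∀ r c, (fun k ↦ Ai (r, k) c).support.Subsingleton) (v : ρ → κ → ℝ) :
    |trace ((blockRowMatrix v * A)ᵀ * (blockRowMatrix v * A)) -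
        ∑ r, ∑ c, ∑ k, v r k ^ 2 * Ai (r, k) c ^ 2| ≤
      ‖(A + Ai) * (A - Ai)ᵀ‖ * ∑ r, v r ⬝ᵥ v r := by
  simp_rw [trace_transpose_mul_self, mul_apply_eq_vecMul,
    ← blockRowMatrix_vecMul_dotProduct_self (hAi _), ← Finset.sum_sub_distrib, Finset.mul_sum,
    vecMul_dotProduct_vecMul_sub_vecMul_dotProduct_vecMul, ← blockRowMatrix_dotProduct_self]
  exact (Finset.abs_sum_le_sum_abs _ _).trans
    (Finset.sum_le_sum fun r _ ↦ abs_dotProduct_mulVec_le _ _)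

end LinearAlgebra

section SubGaussian

lemma subGaussianNorm_le_sqrt {Ω : Type*} [MeasureSpace Ω] {X : Ω → ℝ} {c : ℝ≥0}
    (h : HasSubgaussianMGF (fun ω ↦ X ω - ∫ ω', X ω') c) : subGaussianNorm X ≤ NNReal.sqrt c := by
  refine le_of_forall_gt_imp_ge_of_dense fun t ht ↦
    csInf_le ⟨0, fun _ hs ↦ hs.1.le⟩ ⟨(NNReal.coe_nonneg _).trans_lt ht, fun l ↦ ?_⟩
  have hct : (c : ℝ) ≤ t ^ 2 := by
    rw [← NNReal.sq_sqrt c, NNReal.coe_pow]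
    exact pow_le_pow_left₀ (NNReal.coe_nonneg _) ht.le 2
  calc _ = mgf (fun ω ↦ X ω - ∫ ω', X ω') volume l := rfl
    _ ≤ Real.exp (c * l ^ 2 / 2) := h.mgf_le l
    _ ≤ Real.exp (l ^ 2 * t ^ 2 / 2) := by rw [mul_comm (c : ℝ)]; gcongr

lemma hasSubgaussianMGF_sub_integral_of_abs_sub_le {Ω : Type*} [MeasurableSpace Ω]
    {μ : Measure Ω} [IsProbabilityMeasure μ] {X : Ω → ℝ} {d : ℝ} {R : ℝ≥0}
    (hm : AEMeasurable X μ) (hb : ∀ᵐ ω ∂μ, |X ω - d| ≤ R) :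
    HasSubgaussianMGF (fun ω ↦ X ω - μ[X]) (R ^ 2) μ := by
  have h := hasSubgaussianMGF_of_mem_Icc (a := d - R) (b := d + R) hm <| by
    filter_upwards [hb] with ω hω
    exact ⟨by linarith [(abs_le.1 hω).1], by linarith [(abs_le.1 hω).2]⟩
  convert h using 2
  ext
  simp only [NNReal.coe_div, coe_nnnorm, add_sub_sub_cancel, Real.norm_eq_abs]
  rw [abs_of_nonneg (by positivity)]
  push_cast
  ring

lemma subGaussianNorm_add_add_const_le {Ω : Type*} [MeasureSpace Ω]
    [IsProbabilityMeasure (volume : Measure Ω)] {S Z : Ω → ℝ} {d : ℝ} {R c : ℝ≥0}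
    (hS : AEMeasurable S) (hSd : ∀ᵐ ω, |S ω - d| ≤ R) (hZ : HasSubgaussianMGF Z c)
    (hZ0 : ∫ ω, Z ω = 0) (b : ℝ) :
    subGaussianNorm (fun ω ↦ S ω + Z ω + b) ≤ R + NNReal.sqrt c := by
  have hS' := hasSubgaussianMGF_sub_integral_of_abs_sub_le hS hSd
  have hSint : Integrable S :=
    (hS'.integrable.add (integrable_const (∫ ω, S ω))).congr (ae_of_all _ fun ω ↦ by simp)
  have hSZ : Integrable fun ω ↦ S ω + Z ω := hSint.add hZ.integrable
  have hcenter : (fun ω ↦ S ω + Z ω + b - ∫ ω', (S ω' + Z ω' + b)) =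
      fun ω ↦ (S ω - ∫ ω', S ω') + Z ω := by
    ext ω
    rw [integral_add hSZ (integrable_const b), integral_add hSint hZ.integrable, hZ0]
    simp only [integral_const, probReal_univ, smul_eq_mul, one_mul]
    ring
  have h := subGaussianNorm_le_sqrt (X := fun ω ↦ S ω + Z ω + b) (by rw [hcenter]; exact hS'.add hZ)
  rwa [NNReal.sqrt_sq, NNReal.sqrt_sq, NNReal.coe_add] at h

end SubGaussian

section Rademacher

def IsRademacher {Ω : Type*} [MeasurableSpace Ω] (V : Ω → ℝ) (μ : Measure Ω) : Prop :=
  μ {ω | V ω = 1} = 1 / 2 ∧ μ {ω | V ω = -1} = 1 / 2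

variable {Ω : Type*} [MeasurableSpace Ω] {μ : Measure Ω} [IsProbabilityMeasure μ] {V : Ω → ℝ}

namespace IsRademacher

lemma ae_eq_one_or_eq_neg_one (hm : Measurable V) (hV : IsRademacher V μ) :
    ∀ᵐ ω ∂μ, V ω = 1 ∨ V ω = -1 := by
  have hdisj : Disjoint {ω | V ω = 1} {ω | V ω = -1} :=
    Set.disjoint_left.2 fun ω (h1 : V ω = 1) (h2 : V ω = -1) ↦ by norm_num [h1] at h2
  have hs : MeasurableSet {ω | V ω = 1 ∨ V ω = -1} :=
    (hm (measurableSet_singleton 1)).union (hm (measurableSet_singleton (-1)))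
  rw [ae_iff_measure_eq hs.nullMeasurableSet, Set.ofPred_or,
    measure_union hdisj (hm (measurableSet_singleton _)), hV.1, hV.2, ENNReal.add_halves,
    measure_univ]

lemma ae_sq_eq_one (hm : Measurable V) (hV : IsRademacher V μ) : ∀ᵐ ω ∂μ, V ω ^ 2 = 1 :=
  (hV.ae_eq_one_or_eq_neg_one hm).mono fun ω hω ↦ by rcases hω with h | h <;> simp [h]

lemma integral_eq_zero (hm : Measurable V) (hV : IsRademacher V μ) : ∫ ω, V ω ∂μ = 0 := by
  have h1 : MeasurableSet {ω | V ω = 1} := hm (measurableSet_singleton 1)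
  have h2 : MeasurableSet {ω | V ω = -1} := hm (measurableSet_singleton (-1))
  have hV' : V =ᵐ[μ] fun ω ↦ {ω | V ω = 1}.indicator 1 ω - {ω | V ω = -1}.indicator 1 ω := by
    filter_upwards [hV.ae_eq_one_or_eq_neg_one hm] with ω hω
    rcases hω with hω | hω <;> norm_num [Set.indicator, hω]
  rw [integral_congr_ae hV', integral_sub ((integrable_const 1).indicator h1)
    ((integrable_const 1).indicator h2), integral_indicator_one h1, integral_indicator_one h2,
    measureReal_def, measureReal_def, hV.1, hV.2, sub_self]

lemma hasSubgaussianMGF_const_mul (hm : Measurable V) (hV : IsRademacher V μ) (c : ℝ) :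
    HasSubgaussianMGF (fun ω ↦ c * V ω) (‖c‖₊ ^ 2) μ := by
  have h := hasSubgaussianMGF_of_mem_Icc_of_integral_eq_zero (a := -|c|) (b := |c|)
    (hm.const_mul c).aemeasurable ?_ (by rw [integral_const_mul, hV.integral_eq_zero hm, mul_zero])
  · convert h using 2
    ext
    simp [abs_of_nonneg (add_nonneg (abs_nonneg c) (abs_nonneg c))]
  · filter_upwards [hV.ae_eq_one_or_eq_neg_one hm] with ω hω
    rcases hω with hω | hω <;> simp [hω, neg_abs_le, le_abs_self, neg_le_abs]

end IsRademacher

variable {ι : Type*} [Fintype ι] {U : ι → Ω → ℝ}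

lemma hasSubgaussianMGF_sum_mul_rademacher (hm : ∀ i, Measurable (U i))
    (hU : ∀ i, IsRademacher (U i) μ) (hind : iIndepFun U μ) (c : ι → ℝ) :
    HasSubgaussianMGF (fun ω ↦ ∑ i, c i * U i ω) (∑ i, ‖c i‖₊ ^ 2) μ :=
  HasSubgaussianMGF.sum_of_iIndepFun
    (hind.comp (fun i x ↦ c i * x) fun i ↦ measurable_id.const_mul (c i))
    fun i _ ↦ (hU i).hasSubgaussianMGF_const_mul (hm i) (c i)

lemma integral_sum_mul_rademacher (hm : ∀ i, Measurable (U i))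
    (hU : ∀ i, IsRademacher (U i) μ) (c : ι → ℝ) :
    ∫ ω, ∑ i, c i * U i ω ∂μ = 0 := by
  rw [integral_finsetSum _ fun i _ ↦ ((hU i).hasSubgaussianMGF_const_mul (hm i) (c i)).integrable]
  simp [integral_const_mul, fun i ↦ (hU i).integral_eq_zero (hm i)]

end Rademacher

section DFA

variable {M K : ℕ} {a : Fin K → ℝ}

/-- The DFA transmission matrix `Q`, for the signs `u m k = U_k(m)`. -/
noncomputable def dfaMatrix (a : Fin K → ℝ) (u : Fin M → Fin K → ℝ) :
    Matrix (Fin M × Fin 2) ((Fin M × Fin 2) × Fin K) ℝ :=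
  blockRowMatrix fun r k ↦ √(a k) * u r.1 k

lemma measurable_trace_dfaMatrix_mul {Ω γ : Type*} [MeasurableSpace Ω] [Fintype γ]
    {U : Ω → Fin M → Fin K → ℝ} (hU : ∀ m k, Measurable fun ω ↦ U ω m k)
    (A : Matrix ((Fin M × Fin 2) × Fin K) γ ℝ) :
    Measurable fun ω ↦ trace ((dfaMatrix a (U ω) * A)ᵀ * (dfaMatrix a (U ω) * A)) := by
  have hQ : Continuous (dfaMatrix (M := M) a) := continuous_matrix fun r j ↦ by
    simp only [dfaMatrix, blockRowMatrix, of_apply]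
    split_ifs <;> fun_prop
  exact ((hQ.matrix_mul continuous_const).matrix_transpose.matrix_mul
    (hQ.matrix_mul continuous_const)).matrix_trace.measurable.comp
    (measurable_pi_iff.2 fun m ↦ measurable_pi_iff.2 (hU m))

lemma abs_trace_dfaMatrix_mul_sub_le {γ : Type*} [Fintype γ]
    {A Ai : Matrix ((Fin M × Fin 2) × Fin K) γ ℝ}
    (hAi : ∀ r c, (fun k ↦ Ai (r, k) c).support.Subsingleton) (ha : ∀ k, 0 ≤ a k)
    {u : Fin M → Fin K → ℝ} (hu : ∀ m k, u m k ^ 2 = 1) :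
    |trace ((dfaMatrix a u * A)ᵀ * (dfaMatrix a u * A)) -
        ∑ r, ∑ c, ∑ k, a k * Ai (r, k) c ^ 2| ≤
      2 * M * (∑ k, a k) * opNorm ((A + Ai) * (A - Ai)ᵀ) := by
  classical
  rw [opNorm_eq_l2_opNorm]
  have hv : ∀ (r : Fin M × Fin 2) k, (√(a k) * u r.1 k) ^ 2 = a k := fun r k ↦ by
    rw [mul_pow, Real.sq_sqrt (ha k), hu, mul_one]
  have h := abs_trace_blockRowMatrix_mul_sub_le (A := A) hAi fun r k ↦ √(a k) * u r.1 k
  simp only [hv, dotProduct, ← sq, Finset.sum_const, Finset.card_univ, Fintype.card_prod,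
    Fintype.card_fin, nsmul_eq_mul] at h
  push_cast at h
  exact h.trans_eq (by ring)

noncomputable def dfaCoeff (a : Fin K → ℝ)
    (G : Matrix ((Fin M × Fin 2) × Fin K) (Fin M × Fin 2) ℝ) (p : Fin M × Fin K) : ℝ :=
  2 * √(a p.2) * ∑ i, G ((p.1, i), p.2) (p.1, i)

lemma two_mul_trace_dfaMatrix_mul (G : Matrix ((Fin M × Fin 2) × Fin K) (Fin M × Fin 2) ℝ)
    (u : Fin M → Fin K → ℝ) :
    2 * trace (dfaMatrix a u * G) = ∑ p, dfaCoeff a G p * u p.1 p.2 := by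
  simp only [trace, diag, mul_apply_eq_vecMul, dfaMatrix, blockRowMatrix_vecMul_apply,
    dfaCoeff, Fintype.sum_prod_type, Finset.mul_sum, Finset.sum_mul]
  refine Finset.sum_congr rfl fun m _ ↦ ?_
  rw [Finset.sum_comm]
  exact Finset.sum_congr rfl fun k _ ↦ Finset.sum_congr rfl fun i _ ↦ by ring

lemma sum_sq_dfaCoeff_le {P : ℝ} (hP : 0 ≤ P) (ha : ∀ k, a k ∈ Set.Icc 0 P)
    (G : Matrix ((Fin M × Fin 2) × Fin K) (Fin M × Fin 2) ℝ) :
    ∑ p, dfaCoeff a G p ^ 2 ≤ 8 * P * frobNorm G ^ 2 := by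
  have hdiag : ∑ p : Fin M × Fin K, ∑ i, G ((p.1, i), p.2) (p.1, i) ^ 2 ≤ frobNorm G ^ 2 := by
    rw [sq_frobNorm]
    calc _ = ∑ j : (Fin M × Fin 2) × Fin K, G j j.1 ^ 2 := by
          simp only [Fintype.sum_prod_type]
          exact Finset.sum_congr rfl fun m _ ↦ Finset.sum_comm
      _ ≤ _ := Finset.sum_le_sum fun j _ ↦
          Finset.single_le_sum (f := fun r ↦ G j r ^ 2) (fun _ _ ↦ sq_nonneg _) (Finset.mem_univ _)
  have hcoeff : ∀ p, dfaCoeff a G p ^ 2 ≤ 8 * P * ∑ i, G ((p.1, i), p.2) (p.1, i) ^ 2 := by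
    intro p
    have hsq := sq_sum_le_card_mul_sum_sq (s := Finset.univ)
      (f := fun i : Fin 2 ↦ G ((p.1, i), p.2) (p.1, i))
    simp only [Finset.card_univ, Fintype.card_fin, Nat.cast_ofNat] at hsq
    rw [dfaCoeff, mul_pow, mul_pow, Real.sq_sqrt (ha p.2).1]
    have hT : 0 ≤ ∑ i, G ((p.1, i), p.2) (p.1, i) ^ 2 := by positivity
    nlinarith [mul_le_mul_of_nonneg_left hsq (ha p.2).1, mul_le_mul_of_nonneg_right (ha p.2).2 hT]
  calc _ ≤ ∑ p, 8 * P * ∑ i, G ((p.1, i), p.2) (p.1, i) ^ 2 :=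
        Finset.sum_le_sum fun p _ ↦ hcoeff p
    _ ≤ 8 * P * frobNorm G ^ 2 := by
      rw [← Finset.mul_sum]
      exact mul_le_mul_of_nonneg_left hdiag (by positivity)

lemma sqrt_sum_nnnorm_sq_dfaCoeff_le {P : ℝ} (hP : 0 ≤ P) (ha : ∀ k, a k ∈ Set.Icc 0 P)
    (G : Matrix ((Fin M × Fin 2) × Fin K) (Fin M × Fin 2) ℝ) :
    (NNReal.sqrt (∑ p, ‖dfaCoeff a G p‖₊ ^ 2) : ℝ) ≤ 2 * √(2 * P) * frobNorm G := by
  have h8 : 8 * P * frobNorm G ^ 2 = (2 * √(2 * P) * frobNorm G) ^ 2 := by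
    rw [mul_pow, mul_pow, Real.sq_sqrt (by positivity)]
    ring
  have hF : 0 ≤ frobNorm G := Real.sqrt_nonneg _
  rw [Real.coe_sqrt, ← Real.sqrt_sq (by positivity : 0 ≤ 2 * √(2 * P) * frobNorm G), ← h8]
  push_cast
  simp only [Real.norm_eq_abs, sq_abs]
  exact Real.sqrt_le_sqrt (sum_sq_dfaCoeff_le hP ha G)

end DFA

/-- Rows of `Q` are indexed by `Fin M × Fin 2` (channel use, real/imaginary part), its columns
by `(Fin M × Fin 2) × Fin K`, and the columns of `A`, `A_i` and `B` by the sum of these two index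
types (`2KM + 2M` coordinates). -/
theorem dfa_trace_subGaussianNorm_bound_general
    (K M : ℕ)
    (P ΔfP : ℝ) (hP : 0 < P)
    (a : Fin K → ℝ) (ha : ∀ k, a k ∈ Set.Icc (0 : ℝ) P) (hsum : (∑ k, a k) ≤ ΔfP)
    {Ω : Type*} [MeasureSpace Ω] [IsProbabilityMeasure (volume : Measure Ω)]
    (U : Ω → Fin M → Fin K → ℝ)
    (hUmeas : ∀ m k, Measurable fun ω => U ω m k)
    -- the U_k(m) are i.i.d. uniform on {−1, +1}
    (hUdist : ∀ m k, volume {ω | U ω m k = 1} = 1/2 ∧ volume {ω | U ω m k = -1} = 1/2)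
    (hUindep : iIndepFun
      (fun (p : Fin M × Fin K) ω => U ω p.1 p.2) volume)
    (A Ai : Matrix ((Fin M × Fin 2) × Fin K) (((Fin M × Fin 2) × Fin K) ⊕ (Fin M × Fin 2)) ℝ)
    (B : Matrix (Fin M × Fin 2) (((Fin M × Fin 2) × Fin K) ⊕ (Fin M × Fin 2)) ℝ)
    -- A_i is user-uncorrelated
    (hAi : ∀ (mi : Fin M × Fin 2) c (k₁ k₂ : Fin K),
      Ai (mi, k₁) c ≠ 0 → Ai (mi, k₂) c ≠ 0 → k₁ = k₂)
    (Q : Ω → Matrix (Fin M × Fin 2) ((Fin M × Fin 2) × Fin K) ℝ)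
    (hQ : ∀ ω mi mik, Q ω mi mik =
      if mik.1 = mi then Real.sqrt (a mik.2) * U ω mik.1.1 mik.2 else 0) :
    subGaussianNorm (fun ω => Matrix.trace ((Q ω * A + B).transpose * (Q ω * A + B))) ≤
      4 * M * ΔfP * opNorm ((A + Ai) * (A - Ai).transpose) +
        2 * Real.sqrt (2 * P) * frobNorm (A * B.transpose) := by
  classical
  obtain rfl : Q = fun ω ↦ dfaMatrix a (U ω) :=
    funext fun ω ↦ Matrix.ext fun r j ↦ by
      simp only [hQ, dfaMatrix, blockRowMatrix, of_apply]
      split_ifs with h <;> simp [h]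
  have hU : ∀ p : Fin M × Fin K, IsRademacher (fun ω ↦ U ω p.1 p.2) volume :=
    fun p ↦ hUdist p.1 p.2
  have ha₀ : 0 ≤ ∑ k, a k := Finset.sum_nonneg fun k _ ↦ (ha k).1
  have hR : 0 ≤ 4 * M * ΔfP * opNorm ((A + Ai) * (A - Ai)ᵀ) :=
    mul_nonneg (by have := ha₀.trans hsum; positivity) (opNorm_nonneg _)
  have hquad : ∀ᵐ ω, |trace ((dfaMatrix a (U ω) * A)ᵀ * (dfaMatrix a (U ω) * A)) -
      ∑ r, ∑ c, ∑ k, a k * Ai (r, k) c ^ 2| ≤ (⟨_, hR⟩ : ℝ≥0) := by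
    filter_upwards [ae_all_iff.2 fun m ↦ ae_all_iff.2 fun k ↦
      (hU (m, k)).ae_sq_eq_one (hUmeas m k)] with ω hω
    refine (abs_trace_dfaMatrix_mul_sub_le (fun r c _ h₁ _ h₂ ↦ hAi r c _ _ h₁ h₂)
      (fun k ↦ (ha k).1) hω).trans (mul_le_mul_of_nonneg_right ?_ (opNorm_nonneg _))
    nlinarith
  have hZ := hasSubgaussianMGF_sum_mul_rademacher (fun p ↦ hUmeas p.1 p.2) hU hUindep
    (dfaCoeff a (A * Bᵀ))
  have hZ0 := integral_sum_mul_rademacher (fun p : Fin M × Fin K ↦ hUmeas p.1 p.2) hU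
    (dfaCoeff a (A * Bᵀ))
  simp_rw [trace_transpose_mul_self_add, Matrix.mul_assoc, two_mul_trace_dfaMatrix_mul]
  exact (subGaussianNorm_add_add_const_le
    (measurable_trace_dfaMatrix_mul hUmeas A).aemeasurable hquad hZ hZ0 _).trans
    (add_le_add_right (sqrt_sum_nnnorm_sq_dfaCoeff_le hP.le ha _) _)

/-- Sub-Gaussian norm bound on `tr C` where `C = (QA+B)ᵀ(QA+B)`, with `Q` the random DFA
transmission matrix and `A_i` a user-uncorrelated matrix (each of its `2M` stacked `K`-row
blocks has at most one nonzero entry per column):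
`τ(tr C) ≤ 4MΔ(f‖P)·‖(A+A_i)(A−A_i)ᵀ‖_op + 2√(2P)·‖ABᵀ‖_F`.

Index conventions: rows of `Q` are indexed by `Fin M × Fin 2` (channel use,
real/imaginary part), its columns by `(Fin M × Fin 2) × Fin K`, and the columns of `A`,
`A_i` and `B` by the sum of these two index types (`2KM + 2M` coordinates). -/
theorem dfa_trace_subGaussianNorm_bound
    (K M : ℕ) (hK : 0 < K) (hM : 0 < M)
    (P ΔfP : ℝ) (hP : 0 < P) (hΔfP : 0 < ΔfP)
    (a : Fin K → ℝ) (ha : ∀ k, a k ∈ Set.Icc (0 : ℝ) P) (hsum : (∑ k, a k) ≤ ΔfP)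
    {Ω : Type*} [MeasureSpace Ω] [IsProbabilityMeasure (volume : Measure Ω)]
    (U : Ω → Fin M → Fin K → ℝ)
    (hUmeas : ∀ m k, Measurable fun ω => U ω m k)
    -- the U_k(m) are i.i.d. uniform on {−1, +1}
    (hUdist : ∀ m k, volume {ω | U ω m k = 1} = 1/2 ∧ volume {ω | U ω m k = -1} = 1/2)
    (hUindep : iIndepFun
      (fun (p : Fin M × Fin K) ω => U ω p.1 p.2) volume)
    (A Ai : Matrix ((Fin M × Fin 2) × Fin K) (((Fin M × Fin 2) × Fin K) ⊕ (Fin M × Fin 2)) ℝ)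
    (B : Matrix (Fin M × Fin 2) (((Fin M × Fin 2) × Fin K) ⊕ (Fin M × Fin 2)) ℝ)
    -- A_i is user-uncorrelated
    (hAi : ∀ (mi : Fin M × Fin 2) c (k₁ k₂ : Fin K),
      Ai (mi, k₁) c ≠ 0 → Ai (mi, k₂) c ≠ 0 → k₁ = k₂)
    (Q : Ω → Matrix (Fin M × Fin 2) ((Fin M × Fin 2) × Fin K) ℝ)
    (hQ : ∀ ω mi mik, Q ω mi mik =
      if mik.1 = mi then Real.sqrt (a mik.2) * U ω mik.1.1 mik.2 else 0) :
    subGaussianNorm (fun ω => Matrix.trace ((Q ω * A + B).transpose * (Q ω * A + B))) ≤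
      4 * M * ΔfP * opNorm ((A + Ai) * (A - Ai).transpose) +
        2 * Real.sqrt (2 * P) * frobNorm (A * B.transpose) :=
  dfa_trace_subGaussianNorm_bound_general K M P ΔfP hP a ha hsum U hUmeas hUdist hUindep A Ai B hAi
    Q hQ
end

section
/- Let X be a real random variable with E X = 0 and finite sub-exponential norm ‖X‖_se. Then for every λ ∈ ℝ with |λ|·‖X‖_se < 1: E exp(λX) ≤ 1 + λ²·‖X‖_se² / (1 − |λ|·‖X‖_se). -/
open MeasureTheory ProbabilityTheory Real

/-- The sub-exponential norm of a real random variable: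
`‖X‖_se := sup_{k ≥ 1} (E|X|^k / k!)^{1/k}`. -/
noncomputable def subExpNorm {Ω : Type*} [MeasureSpace Ω] (X : Ω → ℝ) : ℝ :=
  ⨆ k : {k : ℕ // 1 ≤ k}, ((∫ ω, |X ω| ^ (k : ℕ)) / (Nat.factorial k)) ^ (((k : ℕ) : ℝ)⁻¹)

/-! Expanding `exp (λX)` into its power series and integrating term by term,
the constant term is `1`, the linear term vanishes since `X` is centred, and the moment bound
`E|X|^k ≤ ‖X‖_se^k k!` bounds the `k`-th term by `(|λ| ‖X‖_se)^k`; the geometric tail from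
`k = 2` on sums to `λ² ‖X‖_se² / (1 - |λ| ‖X‖_se)`. -/

theorem le_add_sq_div_one_sub_of_hasSum {a : ℕ → ℝ} {s r : ℝ} (hs : HasSum a s) (hr0 : 0 ≤ r)
    (hr1 : r < 1) (ha : ∀ k, a (k + 2) ≤ r ^ (k + 2)) : s ≤ a 0 + a 1 + r ^ 2 / (1 - r) := by
  have htail : HasSum (fun k => a (k + 2)) (s - ∑ i ∈ Finset.range 2, a i) :=
    (hasSum_nat_add_iff' 2).2 hs
  have hgeom : HasSum (fun k => r ^ (k + 2)) (r ^ 2 / (1 - r)) := by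
    simpa only [pow_add, mul_comm, div_eq_mul_inv] using
      (hasSum_geometric_of_lt_one hr0 hr1).mul_left (r ^ 2)
  have := hasSum_le ha htail hgeom
  simp only [Finset.sum_range_succ, Finset.sum_range_zero, zero_add] at this
  linarith

section

variable {Ω : Type*} {m : MeasurableSpace Ω} {μ : Measure Ω}

theorem hasSum_integral_pow_div_factorial {f : Ω → ℝ} (hf : AEStronglyMeasurable f μ)
    (hint : ∀ k, Integrable (fun ω => |f ω| ^ k) μ)
    (hsum : Summable fun k => ∫ ω, |f ω| ^ k / k.factorial ∂μ) :
    HasSum (fun k => ∫ ω, f ω ^ k / k.factorial ∂μ) (∫ ω, exp (f ω) ∂μ) := by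
  have hterm (k : ℕ) : Integrable (fun ω => f ω ^ k / k.factorial) μ :=
    ((integrable_norm_iff (hf.pow k)).1
      (by simpa only [Pi.pow_apply, norm_pow, norm_eq_abs] using hint k)).div_const _
  have hnorm : Summable fun k => ∫ ω, ‖f ω ^ k / k.factorial‖ ∂μ := by
    simpa only [norm_div, norm_pow, norm_eq_abs, Nat.abs_cast] using hsum
  simpa only [(NormedSpace.expSeries_div_hasSum_exp (f _)).tsum_eq, ← Real.exp_eq_exp_ℝ] using
    hasSum_integral_of_summable_integral_norm hterm hnorm

theorem integral_exp_mul_le_of_integral_abs_pow_le [IsProbabilityMeasure μ] {X : Ω → ℝ}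
    (hX : AEStronglyMeasurable X μ) (hcent : ∫ ω, X ω ∂μ = 0)
    (hint : ∀ k, Integrable (fun ω => |X ω| ^ k) μ) {K l : ℝ}
    (hmom : ∀ k, ∫ ω, |X ω| ^ k ∂μ ≤ K ^ k * k.factorial) (hl : |l| * K < 1) :
    ∫ ω, exp (l * X ω) ∂μ ≤ 1 + l ^ 2 * K ^ 2 / (1 - |l| * K) := by
  have hK : 0 ≤ K := by
    simpa using (integral_nonneg fun ω => pow_nonneg (abs_nonneg (X ω)) 1).trans (hmom 1)
  set r := |l| * K
  have habs (k : ℕ) : (fun ω => |l * X ω| ^ k) = fun ω => |l| ^ k * |X ω| ^ k := by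
    simp only [abs_mul, mul_pow]
  have hterm (k : ℕ) : ∫ ω, |l * X ω| ^ k / k.factorial ∂μ ≤ r ^ k := by
    rw [integral_div, habs, integral_const_mul, div_le_iff₀ (by positivity), mul_pow, mul_assoc]
    exact mul_le_mul_of_nonneg_left (hmom k) (by positivity)
  have hsum : Summable fun k => ∫ ω, |l * X ω| ^ k / k.factorial ∂μ :=
    (summable_geometric_of_lt_one (by positivity) hl).of_nonneg_of_le
      (fun k => integral_nonneg fun ω => by positivity) hterm
  have hS := hasSum_integral_pow_div_factorial (hX.const_mul l)
    (fun k => habs k ▸ (hint k).const_mul _) hsum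
  calc ∫ ω, exp (l * X ω) ∂μ
      ≤ ∫ ω, (l * X ω) ^ 0 / (0 : ℕ).factorial ∂μ + ∫ ω, (l * X ω) ^ 1 / (1 : ℕ).factorial ∂μ
        + r ^ 2 / (1 - r) :=
        le_add_sq_div_one_sub_of_hasSum hS (by positivity) hl fun k =>
          (le_abs_self _).trans <| (abs_integral_le_integral_abs).trans <| by
            simpa only [abs_div, abs_pow, Nat.abs_cast] using hterm (k + 2)
    _ = 1 + l ^ 2 * K ^ 2 / (1 - r) := by
        simp [integral_const_mul, hcent, r, mul_pow]

end

theorem integral_abs_pow_le_subExpNorm_pow_mul_factorial {Ω : Type*} [MeasureSpace Ω]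
    {X : Ω → ℝ} (hXbdd : BddAbove (Set.range fun k : {k : ℕ // 1 ≤ k} =>
      ((∫ ω, |X ω| ^ (k : ℕ)) / (Nat.factorial k)) ^ (((k : ℕ) : ℝ)⁻¹)))
    {k : ℕ} (hk : 1 ≤ k) :
    ∫ ω, |X ω| ^ k ≤ subExpNorm X ^ k * k.factorial := by
  have hle := le_ciSup hXbdd ⟨k, hk⟩
  have hnonneg : 0 ≤ (∫ ω, |X ω| ^ k) / k.factorial :=
    div_nonneg (integral_nonneg fun ω => by positivity) (by positivity)
  rwa [rpow_inv_le_iff_of_pos hnonneg ((rpow_nonneg hnonneg _).trans hle) (by positivity), rpow_natCast,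
    div_le_iff₀ (by positivity)] at hle

/-- If `X` is centered with finite sub-exponential norm, then for every `λ` with
`|λ|·‖X‖_se < 1` we have `E exp(λX) ≤ 1 + λ²‖X‖_se²/(1 − |λ|‖X‖_se)`. -/
theorem mgf_le_of_subExp
    {Ω : Type*} [MeasureSpace Ω] [IsProbabilityMeasure (volume : Measure Ω)]
    (X : Ω → ℝ) (hXmeas : Measurable X)
    (hXcent : (∫ ω, X ω) = 0)
    -- finiteness of the sub-exponential norm: all absolute moments exist and
    -- the defining family is bounded above
    (hXint : ∀ k : ℕ, 1 ≤ k → Integrable (fun ω => |X ω| ^ k))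
    (hXbdd : BddAbove (Set.range fun k : {k : ℕ // 1 ≤ k} =>
      ((∫ ω, |X ω| ^ (k : ℕ)) / (Nat.factorial k)) ^ (((k : ℕ) : ℝ)⁻¹)))
    (l : ℝ) (hl : |l| * subExpNorm X < 1) :
    (∫ ω, Real.exp (l * X ω)) ≤
      1 + l ^ 2 * subExpNorm X ^ 2 / (1 - |l| * subExpNorm X) := by
  refine integral_exp_mul_le_of_integral_abs_pow_le hXmeas.aestronglyMeasurable hXcent
    (fun k => ?_) (fun k => ?_) hl
  all_goals rcases Nat.eq_zero_or_pos k with rfl | hk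
  · simp
  · exact hXint k hk
  · simp
  · exact integral_abs_pow_le_subExpNorm_pow_mul_factorial hXbdd hk
end

section
/- If X is a real random variable with |X| ≤ 1 almost surely, and Y is a centered sub-Gaussian real random variable independent of X, then τ(X·Y) ≤ τ(Y). -/
open MeasureTheory ProbabilityTheory Real

/-- `X` is sub-Gaussian if some `t > 0` witnesses the defining bound, i.e. `τ(X) < ∞`. -/
def IsSubGaussian {Ω : Type*} [MeasureSpace Ω] (X : Ω → ℝ) : Prop :=
  ∃ t : ℝ, 0 < t ∧ ∀ l : ℝ,
    (∫ ω, Real.exp (l * (X ω - ∫ ω', X ω'))) ≤ Real.exp (l ^ 2 * t ^ 2 / 2)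

/-!
Conditioning on `X`, independence gives `E exp(λXY) = ∫ E exp(λxY) dP_X(x)`, and for `|x| ≤ 1` the
inner expectation is at most `exp(λ²x²t²/2) ≤ exp(λ²t²/2)` whenever `t` witnesses the bound for `Y`.
The computation is done with lower Lebesgue integrals, because the bound for `Y` says nothing where
`exp(λxY)` is not integrable (its Bochner integral is then the junk value `0`); if `E exp(λXY)` is
finite, the inner integrals are finite for `P_X`-almost every `x`, and there the bound applies.
-/

open scoped ENNReal

theorem MeasureTheory.toReal_lintegral_le_of_ae_toReal_le {α : Type*} [MeasurableSpace α]
    {μ : Measure α} [IsProbabilityMeasure μ] {f : α → ℝ≥0∞} (hf : AEMeasurable f μ) {c : ℝ}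
    (h : ∀ᵐ x ∂μ, (f x).toReal ≤ c) : (∫⁻ x, f x ∂μ).toReal ≤ c := by
  have hc : 0 ≤ c := by
    obtain ⟨x, hx⟩ := h.exists
    exact ENNReal.toReal_nonneg.trans hx
  by_cases htop : ∫⁻ x, f x ∂μ = ∞
  · simpa [htop] using hc
  refine ENNReal.toReal_le_of_le_ofReal hc ?_
  calc ∫⁻ x, f x ∂μ ≤ ∫⁻ _, ENNReal.ofReal c ∂μ := by
        refine lintegral_mono_ae ?_
        filter_upwards [h, ae_lt_top' hf htop] with x hx hfx
        exact (ENNReal.le_ofReal_iff_toReal_le hfx.ne hc).2 hx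
    _ = ENNReal.ofReal c := by simp

theorem ProbabilityTheory.IndepFun.lintegral_comp_eq_lintegral_lintegral_map
    {Ω α β : Type*} [MeasurableSpace Ω] [MeasurableSpace α] [MeasurableSpace β]
    {μ : Measure Ω} [IsFiniteMeasure μ] {X : Ω → α} {Y : Ω → β} (hXY : IndepFun X Y μ)
    (hX : AEMeasurable X μ) (hY : AEMeasurable Y μ) {f : α × β → ℝ≥0∞} (hf : Measurable f) :
    ∫⁻ ω, f (X ω, Y ω) ∂μ = ∫⁻ x, ∫⁻ y, f (x, y) ∂μ.map Y ∂μ.map X := by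
  rw [← lintegral_prod _ hf.aemeasurable, ← hXY.map_prod_eq_prod_map_map hX hY,
    lintegral_map' hf.aemeasurable (hX.prodMk hY)]

theorem ProbabilityTheory.mgf_eq_toReal_lintegral {Ω : Type*} [MeasurableSpace Ω]
    {μ : Measure Ω} {X : Ω → ℝ} (hX : AEMeasurable X μ) (t : ℝ) :
    mgf X μ t = (∫⁻ ω, ENNReal.ofReal (exp (t * X ω)) ∂μ).toReal :=
  integral_eq_lintegral_of_nonneg_ae (ae_of_all _ fun _ => (exp_pos _).le)
    (by fun_prop : AEMeasurable (fun ω => exp (t * X ω)) μ).aestronglyMeasurable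

theorem ProbabilityTheory.mgf_mul_le_of_abs_le_one {Ω : Type*} [MeasurableSpace Ω]
    {μ : Measure Ω} [IsProbabilityMeasure μ] {X Y : Ω → ℝ} (hX : AEMeasurable X μ)
    (hY : AEMeasurable Y μ) (hXY : IndepFun X Y μ) (hXbd : ∀ᵐ ω ∂μ, |X ω| ≤ 1) {l c : ℝ}
    (hc : ∀ s, |s| ≤ |l| → mgf Y μ s ≤ c) :
    mgf (X * Y) μ l ≤ c := by
  have hmeas : Measurable fun p : ℝ × ℝ => ENNReal.ofReal (exp (l * (p.1 * p.2))) := by fun_prop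
  rw [mgf_eq_toReal_lintegral (hX.mul hY)]
  refine (congrArg ENNReal.toReal
    (hXY.lintegral_comp_eq_lintegral_lintegral_map hX hY hmeas)).trans_le ?_
  have := Measure.isProbabilityMeasure_map hX
  refine toReal_lintegral_le_of_ae_toReal_le hmeas.lintegral_prod_right'.aemeasurable ?_
  have hbd : ∀ᵐ x ∂μ.map X, |x| ≤ 1 :=
    (ae_map_iff hX (measurableSet_le (by fun_prop) measurable_const)).2 hXbd
  filter_upwards [hbd] with x hx
  calc (∫⁻ y, ENNReal.ofReal (exp (l * (x * y))) ∂μ.map Y).toReal = mgf Y μ (l * x) := by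
        rw [← mgf_id_map hY, mgf_eq_toReal_lintegral measurable_id.aemeasurable]
        simp only [id, mul_comm x, mul_assoc]
    _ ≤ c := hc _ (by rw [abs_mul]; exact mul_le_of_le_one_right (abs_nonneg l) hx)

/-- If `|X| ≤ 1` almost surely and `Y` is a centered sub-Gaussian random variable
independent of `X`, then `τ(X·Y) ≤ τ(Y)`. -/
theorem subGaussianNorm_mul_le_of_abs_le_one
    {Ω : Type*} [MeasureSpace Ω] [IsProbabilityMeasure (volume : Measure Ω)]
    (X Y : Ω → ℝ)
    (hXmeas : Measurable X) (hYmeas : Measurable Y)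
    (hXbd : ∀ᵐ ω, |X ω| ≤ 1)
    (hYcent : (∫ ω, Y ω) = 0)
    (hYsub : IsSubGaussian Y)
    (hindep : IndepFun X Y volume) :
    subGaussianNorm (fun ω => X ω * Y ω) ≤ subGaussianNorm Y := by
  obtain ⟨t₀, ht₀, hY₀⟩ := hYsub
  have hXYcent : ∫ ω, X ω * Y ω = 0 := by
    rw [hindep.integral_fun_mul_eq_mul_integral hXmeas.aestronglyMeasurable
      hYmeas.aestronglyMeasurable, hYcent, mul_zero]
  refine csInf_le_csInf ⟨0, fun t ht => ht.1.le⟩ ⟨t₀, ht₀, hY₀⟩ fun t ⟨ht, hYt⟩ => ⟨ht, fun l => ?_⟩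
  simp only [hYcent, hXYcent, sub_zero] at hYt ⊢
  refine mgf_mul_le_of_abs_le_one hXmeas.aemeasurable hYmeas.aemeasurable hindep hXbd
    fun s hs => (hYt s).trans ?_
  gcongr exp (?_ * _ / 2)
  exact sq_le_sq.2 hs
end
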